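/- arXiv:2006.00620 — 2 statements merged into one kernel-verified Lean document; each statement's English description precedes it below -/
import Mathlib

section
/- Let p, q, r be integers with p > q + 1, r > q + 1, and p + r even. Then ζ_{H^{(p,q+1)}}(r) + ζ_{H^{(r,q+1)}}(p) = ζ(p + r) + (2/q!) · Σ_{m odd, 0 ≤ m ≤ q} Σ_{k=0}^{m} (−1)^k · [q+1, m+1] · C(m, k) · ζ_{H^{(p−k)}}(r + k − m) + (1/q!) · Σ_{m=0}^{q} Σ_{k=0}^{m} (−1)^{m+k} · [q+1, m+1] · C(m, k) · ζ(p − k) · ζ(r + k − m), where ζ is the Riemann zeta function. -/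
/-!
By the hockey-stick identity, `H_n^{(p,q+1)} = ∑_{k ≤ n} C(n-k+q, q) / k^p`, and
`q! C(x+q, q) = (x+1)⋯(x+q) = ∑_m [q+1, m+1] x^m`. Expanding `(n-k)^m` binomially writes
`ζ_{H^{(p,q+1)}}(r)` as a combination of classical Euler sums `ζ_{H^{(p-j)}}(r+j-m)`. In the same
expansion with `p` and `r` swapped, reindex `j ↦ m - j`; then each pair of terms is governed by
the classical reflection `ζ_{H^{(a)}}(b) + ζ_{H^{(b)}}(a) = ζ(a) ζ(b) + ζ(a+b)`, the limit of the
finite identity `∑_{n ≤ N} (H_n^{(a)}/n^b + H_n^{(b)}/n^a) = H_N^{(a)} H_N^{(b)} + H_N^{(a+b)}`.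
The resulting terms `ζ(p+r-m)` carry the factor `∑_k (-1)^k C(m, k)`, which vanishes unless `m = 0`.
-/

open Finset Real

/-- The generalized harmonic number `H_n^{(p)} = ∑_{k=1}^n 1/k^p`. -/
noncomputable def gH (p : ℤ) (n : ℕ) : ℝ := ∑ k ∈ Finset.Icc 1 n, ((k : ℝ) ^ p)⁻¹

/-- The generalized hyperharmonic number `H_n^{(p,q)}`:
`H_n^{(p,0)} = 1/n^p` (with `H_0^{(p,q)} = 0`) and
`H_n^{(p,q)} = ∑_{k=1}^n H_k^{(p,q-1)}` for `q ≥ 1`. -/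
noncomputable def gHH (p : ℤ) : ℕ → ℕ → ℝ
  | 0, n => if n = 0 then 0 else ((n : ℝ) ^ p)⁻¹
  | q + 1, n => ∑ k ∈ Finset.Icc 1 n, gHH p q k

/-- Euler sum of generalized harmonic numbers `ζ_{H^{(p)}}(r) = ∑_{n≥1} H_n^{(p)}/n^r`. -/
noncomputable def eulerSum (p r : ℤ) : ℝ := ∑' n : ℕ+, gH p n / (n : ℝ) ^ r

/-- Euler sum of generalized hyperharmonic numbers
`ζ_{H^{(p,q)}}(r) = ∑_{n≥1} H_n^{(p,q)}/n^r`. -/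
noncomputable def eulerSumHH (p : ℤ) (q : ℕ) (r : ℤ) : ℝ := ∑' n : ℕ+, gHH p q n / (n : ℝ) ^ r

/-- Riemann zeta value at an integer argument, `ζ(s) = ∑_{n≥1} 1/n^s`. -/
noncomputable def zv (s : ℤ) : ℝ := ∑' n : ℕ+, ((n : ℝ) ^ s)⁻¹

/-- Unsigned Stirling numbers of the first kind, defined by
`x(x+1)⋯(x+q-1) = ∑_{k=0}^q [q,k] x^k`, i.e. `[n+1,k] = [n,k-1] + n·[n,k]`. -/
def stirlingFirst : ℕ → ℕ → ℕ
  | 0, 0 => 1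
  | 0, _ + 1 => 0
  | _ + 1, 0 => 0
  | n + 1, k + 1 => stirlingFirst n k + n * stirlingFirst n (k + 1)

/-- The series `μ(r,j) = ∑_{n≥1} 1/(n^r (n+j))`. -/
noncomputable def mu (r j : ℕ) : ℝ := ∑' n : ℕ+, 1 / ((n : ℝ) ^ r * ((n : ℝ) + j))

/-- `e_j(n+1, n+2, …, n+q)`: the `j`-th elementary symmetric polynomial
evaluated at the numbers `n+1, …, n+q`. -/
noncomputable def esymmVal (n q j : ℕ) : ℝ :=
  ∑ s ∈ Finset.powersetCard j (Finset.Icc 1 q), ∏ i ∈ s, ((n : ℝ) + i)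

open Filter Topology

lemma tendsto_sum_Icc_one_tsum_pnat {M : Type*} [AddCommMonoid M] [TopologicalSpace M]
    {f : ℕ → M} (hf : Summable fun n : ℕ+ => f n) :
    Tendsto (fun N => ∑ n ∈ Icc 1 N, f n) atTop (𝓝 (∑' n : ℕ+, f n)) := by
  have h := (hasSum_pnat_iff_hasSum_succ.1 hf.hasSum).tendsto_sum_nat
  refine h.congr fun N => ?_
  rw [range_eq_Ico, sum_Ico_add' f, zero_add, Ico_add_one_right_eq_Icc]

lemma summable_pnat_inv_zpow {a : ℤ} (ha : 1 < a) : Summable fun n : ℕ+ => ((n : ℝ) ^ a)⁻¹ := by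
  have h : Summable fun n : ℕ => ((n : ℝ) ^ a)⁻¹ :=
    ((Real.summable_nat_rpow_inv (p := a)).2 (by exact_mod_cast ha)).congr fun n => by
      rw [Real.rpow_intCast]
  exact h.comp_injective PNat.coe_injective

lemma tendsto_gH_zv {a : ℤ} (ha : 1 < a) : Tendsto (gH a) atTop (𝓝 (zv a)) :=
  tendsto_sum_Icc_one_tsum_pnat (summable_pnat_inv_zpow ha)

lemma gH_succ (a : ℤ) (n : ℕ) : gH a (n + 1) = gH a n + (((n + 1 : ℕ) : ℝ) ^ a)⁻¹ :=
  sum_Icc_succ_top (by omega) _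

lemma gH_nonneg (a : ℤ) (n : ℕ) : 0 ≤ gH a n :=
  sum_nonneg fun k _ => by positivity

lemma gH_monotone (a : ℤ) : Monotone (gH a) :=
  monotone_nat_of_le_succ fun n => by
    rw [gH_succ]
    exact le_add_of_nonneg_right (by positivity)

lemma gH_le_zv {a : ℤ} (ha : 1 < a) (n : ℕ) : gH a n ≤ zv a :=
  (gH_monotone a).ge_of_tendsto (tendsto_gH_zv ha) n

lemma summable_gH_div_zpow {a b : ℤ} (ha : 1 < a) (hb : 1 < b) :
    Summable fun n : ℕ+ => gH a n / (n : ℝ) ^ b :=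
  ((summable_pnat_inv_zpow hb).mul_left (zv a)).of_nonneg_of_le
    (fun n => div_nonneg (gH_nonneg a n) (by positivity))
    fun n => by rw [div_eq_mul_inv]; gcongr; exact gH_le_zv ha n

lemma sum_Icc_gH_div_zpow_add (a b : ℤ) (N : ℕ) :
    ∑ n ∈ Icc 1 N, (gH a n / (n : ℝ) ^ b + gH b n / (n : ℝ) ^ a)
      = gH a N * gH b N + gH (a + b) N := by
  induction N with
  | zero => simp [gH]
  | succ N ih =>
    have hN : ((N + 1 : ℕ) : ℝ) ≠ 0 := by positivity
    rw [sum_Icc_succ_top (by omega), ih, gH_succ, gH_succ, gH_succ, zpow_add₀ hN, mul_inv]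
    field_simp
    ring

theorem eulerSum_add_eulerSum {a b : ℤ} (ha : 1 < a) (hb : 1 < b) :
    eulerSum a b + eulerSum b a = zv a * zv b + zv (a + b) := by
  have hsum : Tendsto (fun N => ∑ n ∈ Icc 1 N, (gH a n / (n : ℝ) ^ b + gH b n / (n : ℝ) ^ a))
      atTop (𝓝 (eulerSum a b + eulerSum b a)) := by
    simp only [sum_add_distrib]
    exact (tendsto_sum_Icc_one_tsum_pnat (f := fun n => gH a n / (n : ℝ) ^ b)
      (summable_gH_div_zpow ha hb)).add
      (tendsto_sum_Icc_one_tsum_pnat (f := fun n => gH b n / (n : ℝ) ^ a)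
      (summable_gH_div_zpow hb ha))
  have hprod : Tendsto (fun N => gH a N * gH b N + gH (a + b) N) atTop
      (𝓝 (zv a * zv b + zv (a + b))) :=
    ((tendsto_gH_zv ha).mul (tendsto_gH_zv hb)).add (tendsto_gH_zv (by omega))
  simp only [sum_Icc_gH_div_zpow_add] at hsum
  exact tendsto_nhds_unique hsum hprod

lemma stirlingFirst_succ_succ (n k : ℕ) :
    stirlingFirst (n + 1) (k + 1) = stirlingFirst n k + n * stirlingFirst n (k + 1) := rfl

lemma stirlingFirst_eq_zero_of_lt {n k : ℕ} (h : n < k) : stirlingFirst n k = 0 := by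
  induction n generalizing k with
  | zero => obtain ⟨k, rfl⟩ := Nat.exists_eq_add_one_of_ne_zero (by omega : k ≠ 0); rfl
  | succ n ih =>
    obtain ⟨k, rfl⟩ := Nat.exists_eq_add_one_of_ne_zero (by omega : k ≠ 0)
    rw [stirlingFirst_succ_succ, ih (by omega), ih (by omega), mul_zero, add_zero]

lemma stirlingFirst_succ_one (n : ℕ) : stirlingFirst (n + 1) 1 = n.factorial := by
  induction n with
  | zero => rfl
  | succ n ih => rw [stirlingFirst_succ_succ, ih, Nat.factorial_succ]; exact zero_add _

lemma prod_range_add_succ_eq_sum_stirlingFirst {R : Type*} [CommSemiring R] (q : ℕ) (x : R) :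
    ∏ i ∈ range q, (x + (i + 1))
      = ∑ m ∈ range (q + 1), (stirlingFirst (q + 1) (m + 1) : R) * x ^ m := by
  induction q with
  | zero => simp [stirlingFirst]
  | succ q ih =>
    have hsplit : ∑ m ∈ range (q + 2), (stirlingFirst (q + 2) (m + 1) : R) * x ^ m
        = ∑ m ∈ range (q + 2), (stirlingFirst (q + 1) m : R) * x ^ m
          + (q + 1) * ∑ m ∈ range (q + 2), (stirlingFirst (q + 1) (m + 1) : R) * x ^ m := by
      rw [mul_sum, ← sum_add_distrib]
      refine sum_congr rfl fun m _ => ?_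
      rw [stirlingFirst_succ_succ]
      push_cast
      ring
    have hlow : ∑ m ∈ range (q + 2), (stirlingFirst (q + 1) m : R) * x ^ m
        = x * ∑ m ∈ range (q + 1), (stirlingFirst (q + 1) (m + 1) : R) * x ^ m := by
      rw [sum_range_succ', mul_sum]
      simp only [stirlingFirst, Nat.cast_zero, zero_mul, add_zero, pow_succ]
      exact sum_congr rfl fun m _ => by ring
    have hhigh : ∑ m ∈ range (q + 2), (stirlingFirst (q + 1) (m + 1) : R) * x ^ m
        = ∑ m ∈ range (q + 1), (stirlingFirst (q + 1) (m + 1) : R) * x ^ m := by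
      rw [sum_range_succ, stirlingFirst_eq_zero_of_lt (by omega), Nat.cast_zero, zero_mul, add_zero]
    rw [prod_range_succ, ih, hsplit, hlow, hhigh]
    ring

lemma factorial_mul_add_choose_eq_sum_stirlingFirst {R : Type*} [CommSemiring R] (q x : ℕ) :
    (q.factorial : R) * ((x + q).choose q : R)
      = ∑ m ∈ range (q + 1), (stirlingFirst (q + 1) (m + 1) : R) * (x : R) ^ m := by
  rw [← prod_range_add_succ_eq_sum_stirlingFirst, ← Nat.cast_mul,
    ← Nat.ascFactorial_eq_factorial_mul_choose, Nat.ascFactorial_eq_prod_range]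
  push_cast
  exact prod_congr rfl fun i _ => by ring

lemma gHH_succ_eq_sum_choose (p : ℤ) (q n : ℕ) :
    gHH p (q + 1) n = ∑ k ∈ Icc 1 n, ((n - k + q).choose q : ℝ) * ((k : ℝ) ^ p)⁻¹ := by
  induction q generalizing n with
  | zero =>
    refine sum_congr rfl fun k hk => ?_
    have hk0 : k ≠ 0 := by have := (mem_Icc.1 hk).1; omega
    simp [gHH, hk0]
  | succ q ih =>
    rw [gHH, sum_congr rfl fun j _ => ih j,
      sum_comm' (t' := Icc 1 n) (s' := fun k => Icc k n) fun j k => by simp only [mem_Icc]; omega]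
    refine sum_congr rfl fun k hk => ?_
    rw [← sum_mul, ← Nat.cast_sum, ← Ico_add_one_right_eq_Icc, sum_Ico_eq_sum_range]
    have hkn := (mem_Icc.1 hk).2
    rw [show n + 1 - k = (n - k) + 1 by omega]
    simp only [Nat.add_sub_cancel_left, Nat.sum_range_add_choose]
    rfl

lemma sum_alternating_choose_mul_inv_zpow {K : Type*} [Field K] {x y : K} (hx : x ≠ 0)
    (hy : y ≠ 0) (a b : ℤ) (m : ℕ) :
    ∑ k ∈ range (m + 1), (-1) ^ k * (m.choose k : K) * ((x ^ (a - k))⁻¹ * (y ^ (b + k - m))⁻¹)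
      = (y - x) ^ m * (x ^ a)⁻¹ * (y ^ b)⁻¹ := by
  rw [show y - x = -x + y by ring, add_pow, sum_mul, sum_mul]
  refine sum_congr rfl fun k hk => ?_
  have hkm : k ≤ m := Nat.lt_succ_iff.1 (mem_range.1 hk)
  rw [← zpow_neg, neg_sub, zpow_sub₀ hx, zpow_natCast, ← zpow_neg,
    show -(b + k - m) = ((m - k : ℕ) : ℤ) - b by omega, zpow_sub₀ hy, zpow_natCast, neg_pow]
  ring

lemma gHH_succ_div_zpow (p r : ℤ) (q : ℕ) {n : ℕ} (hn : n ≠ 0) :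
    gHH p (q + 1) n / (n : ℝ) ^ r
      = (q.factorial : ℝ)⁻¹ * ∑ m ∈ range (q + 1), (stirlingFirst (q + 1) (m + 1) : ℝ) *
          ∑ k ∈ range (m + 1),
            (-1) ^ k * (m.choose k : ℝ) * (gH (p - k) n / (n : ℝ) ^ (r + k - m)) := by
  have hq : (q.factorial : ℝ) ≠ 0 := by positivity
  have hnR : (n : ℝ) ≠ 0 := by exact_mod_cast hn
  have hchoose : ∀ i ∈ Icc 1 n, ((n - i + q).choose q : ℝ)
      = (q.factorial : ℝ)⁻¹ * ∑ m ∈ range (q + 1),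
          (stirlingFirst (q + 1) (m + 1) : ℝ) * ((n : ℝ) - i) ^ m := by
    intro i hi
    rw [← Nat.cast_sub (mem_Icc.1 hi).2, ← factorial_mul_add_choose_eq_sum_stirlingFirst,
      inv_mul_cancel_left₀ hq]
  calc gHH p (q + 1) n / (n : ℝ) ^ r
      = ∑ i ∈ Icc 1 n, (q.factorial : ℝ)⁻¹ * ∑ m ∈ range (q + 1),
          (stirlingFirst (q + 1) (m + 1) : ℝ) *
            (((n : ℝ) - i) ^ m * ((i : ℝ) ^ p)⁻¹ * ((n : ℝ) ^ r)⁻¹) := by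
        rw [gHH_succ_eq_sum_choose, div_eq_mul_inv, sum_mul]
        refine sum_congr rfl fun i hi => ?_
        rw [hchoose i hi, mul_sum, mul_sum, sum_mul, sum_mul]
        exact sum_congr rfl fun m _ => by ring
    _ = _ := by
        rw [← mul_sum, sum_comm]
        congr 1
        refine sum_congr rfl fun m _ => ?_
        rw [← mul_sum]
        congr 1
        simp only [gH, div_eq_mul_inv, sum_mul, mul_sum]
        rw [sum_comm]
        refine sum_congr rfl fun i hi => ?_
        have hiR : (i : ℝ) ≠ 0 := by have := (mem_Icc.1 hi).1; positivity
        rw [← sum_alternating_choose_mul_inv_zpow hiR hnR p r m]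

lemma eulerSumHH_succ_eq {p r : ℤ} {q : ℕ} (hp : (q : ℤ) + 1 < p) (hr : (q : ℤ) + 1 < r) :
    eulerSumHH p (q + 1) r
      = (q.factorial : ℝ)⁻¹ * ∑ m ∈ range (q + 1), (stirlingFirst (q + 1) (m + 1) : ℝ) *
          ∑ k ∈ range (m + 1), (-1) ^ k * (m.choose k : ℝ) * eulerSum (p - k) (r + k - m) := by
  have hterm : ∀ m ∈ range (q + 1), ∀ k ∈ range (m + 1),
      HasSum (fun n : ℕ+ => gH (p - k) n / (n : ℝ) ^ (r + k - m))
        (eulerSum (p - k) (r + k - m)) := by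
    intro m hm k hk
    have hmq : (m : ℤ) ≤ q := by have := mem_range.1 hm; omega
    have hkm : (k : ℤ) ≤ m := by have := mem_range.1 hk; omega
    exact (summable_gH_div_zpow (by omega) (by omega)).hasSum
  rw [eulerSumHH, tsum_congr fun n => gHH_succ_div_zpow p r q n.ne_zero]
  exact ((hasSum_sum fun m hm => (hasSum_sum fun k hk =>
    (hterm m hm k hk).mul_left _).mul_left _).mul_left _).tsum_eq

lemma sum_range_alternating_choose_reflect {R : Type*} [CommRing R] (f : ℕ → R) (m : ℕ) :
    ∑ k ∈ range (m + 1), (-1) ^ k * (m.choose k : R) * f k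
      = ∑ k ∈ range (m + 1), (-1) ^ (m + k) * (m.choose k : R) * f (m - k) := by
  rw [← sum_range_reflect]
  refine sum_congr rfl fun k hk => ?_
  have hkm : k ≤ m := Nat.lt_succ_iff.1 (mem_range.1 hk)
  rw [Nat.add_sub_cancel, Nat.choose_symm hkm,
    show m + k = m - k + 2 * k by omega, pow_add, pow_mul]
  simp

lemma mul_sum_alternating_eulerSum_add_reflect (c : ℝ) {p r : ℤ} {m : ℕ} (hp : (m : ℤ) + 1 < p)
    (hr : (m : ℤ) + 1 < r) :
    c * (∑ k ∈ range (m + 1), (-1) ^ k * (m.choose k : ℝ) * eulerSum (p - k) (r + k - m)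
      + ∑ k ∈ range (m + 1), (-1) ^ k * (m.choose k : ℝ) * eulerSum (r - k) (p + k - m))
      = (1 - (-1) ^ m) *
          ∑ k ∈ range (m + 1), (-1) ^ k * c * (m.choose k : ℝ) * eulerSum (p - k) (r + k - m)
        + ∑ k ∈ range (m + 1), (-1) ^ (m + k) * c * (m.choose k : ℝ) * zv (p - k) * zv (r + k - m)
        + if m = 0 then c * zv (p + r) else 0 := by
  have hreflected : ∀ k ∈ range (m + 1),
      eulerSum (r - ((m - k : ℕ) : ℤ)) (p + ((m - k : ℕ) : ℤ) - m)
        = zv (p - k) * zv (r + k - m) + zv (p + r - m) - eulerSum (p - k) (r + k - m) := by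
    intro k hk
    have hkm : k ≤ m := Nat.lt_succ_iff.1 (mem_range.1 hk)
    have h := eulerSum_add_eulerSum (a := p - k) (b := r + k - m) (by omega) (by omega)
    rw [show p - k + (r + k - m) = p + r - m by ring] at h
    rw [Nat.cast_sub hkm, show r - (m - k) = r + k - m by ring,
      show p + (m - k) - m = p - k by ring]
    linarith
  have hconst : (if m = 0 then c * zv (p + r) else 0)
      = ∑ k ∈ range (m + 1), (-1) ^ (m + k) * c * (m.choose k : ℝ) * zv (p + r - m) := by
    have halt : ∑ k ∈ range (m + 1), (-1) ^ k * (m.choose k : ℝ) = if m = 0 then 1 else 0 := by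
      exact_mod_cast Int.alternating_sum_range_choose
    have hfactor : ∑ k ∈ range (m + 1), (-1) ^ (m + k) * c * (m.choose k : ℝ) * zv (p + r - m)
        = (-1) ^ m * c * zv (p + r - m) * ∑ k ∈ range (m + 1), (-1) ^ k * (m.choose k : ℝ) := by
      rw [mul_sum]
      exact sum_congr rfl fun k _ => by ring
    rw [hfactor, halt]
    split_ifs with hm <;> simp [hm]
  rw [sum_range_alternating_choose_reflect (fun j => eulerSum (r - j) (p + j - m)),
    hconst, mul_sum, mul_add, mul_sum, mul_sum]
  simp only [← sum_add_distrib]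
  refine sum_congr rfl fun k hk => ?_
  rw [hreflected k hk]
  ring

lemma sum_one_sub_neg_one_pow_mul {R : Type*} [CommRing R] (s : Finset ℕ) (f : ℕ → R) :
    ∑ m ∈ s, (1 - (-1) ^ m) * f m = 2 * ∑ m ∈ s with Odd m, f m := by
  rw [sum_filter, mul_sum]
  refine sum_congr rfl fun m _ => ?_
  rcases Nat.even_or_odd m with h | h
  · simp [h.neg_one_pow, Nat.not_odd_iff_even.2 h]
  · rw [h.neg_one_pow, if_pos h]
    ring

theorem stmt_3_general (p r : ℤ) (q : ℕ) (hp : (q : ℤ) + 1 < p) (hr : (q : ℤ) + 1 < r) :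
    eulerSumHH p (q + 1) r + eulerSumHH r (q + 1) p
      = zv (p + r)
        + (2 / (q.factorial : ℝ)) *
            ∑ m ∈ (Finset.range (q + 1)).filter (fun m => Odd m),
              ∑ k ∈ Finset.range (m + 1),
                (-1 : ℝ) ^ k * (stirlingFirst (q + 1) (m + 1) : ℝ) * (m.choose k : ℝ) *
                  eulerSum (p - k) (r + k - m)
        + (1 / (q.factorial : ℝ)) *
            ∑ m ∈ Finset.range (q + 1), ∑ k ∈ Finset.range (m + 1),
              (-1 : ℝ) ^ (m + k) * (stirlingFirst (q + 1) (m + 1) : ℝ) * (m.choose k : ℝ) *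
                zv (p - k) * zv (r + k - m) := by
  have hq : (q.factorial : ℝ) ≠ 0 := by positivity
  rw [eulerSumHH_succ_eq hp hr, eulerSumHH_succ_eq hr hp, ← mul_add, ← sum_add_distrib,
    sum_congr rfl fun m hm => by
      have := mem_range.1 hm
      rw [← mul_add, mul_sum_alternating_eulerSum_add_reflect _ (by omega) (by omega)]]
  simp only [sum_add_distrib, sum_one_sub_neg_one_pow_mul, sum_ite_eq', mem_range,
    Nat.zero_lt_succ, if_true, zero_add, stirlingFirst_succ_one]
  field_simp
  ring

/-- Reflection formula for Euler sums of generalized hyperharmonic numbers. -/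
theorem stmt_3 (p r : ℤ) (q : ℕ) (hp : (q : ℤ) + 1 < p) (hr : (q : ℤ) + 1 < r)
    (hpr : Even (p + r)) :
    eulerSumHH p (q + 1) r + eulerSumHH r (q + 1) p
      = zv (p + r)
        + (2 / (q.factorial : ℝ)) *
            ∑ m ∈ (Finset.range (q + 1)).filter (fun m => Odd m),
              ∑ k ∈ Finset.range (m + 1),
                (-1 : ℝ) ^ k * (stirlingFirst (q + 1) (m + 1) : ℝ) * (m.choose k : ℝ) *
                  eulerSum (p - k) (r + k - m)
        + (1 / (q.factorial : ℝ)) *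
            ∑ m ∈ Finset.range (q + 1), ∑ k ∈ Finset.range (m + 1),
              (-1 : ℝ) ^ (m + k) * (stirlingFirst (q + 1) (m + 1) : ℝ) * (m.choose k : ℝ) *
                zv (p - k) * zv (r + k - m) :=
  stmt_3_general p r q hp hr
end

section
/- Let p ≥ 1 and q ≥ 0 be integers and m ≥ 1 an integer. Then Σ_{n=1}^∞ H_n^{(p,q)} / ((n+m)·C(n+m+q, q)) = (−1)^{p−1} · H_m / m^p + Σ_{i=1}^{p−1} (−1)^{i−1} · ζ(p+1−i) / m^i; in particular the value of the series does not depend on q. -/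
/-!
The weight `w_q(N) = 1 / (N·C(N+q, q))` telescopes: `w_{q+1}(N) = w_q(N) - w_q(N+1)`, hence
`∑_{j ≥ 0} w_{q+1}(N + j) = w_q(N)`. Since `H^{(p,q+1)}` is the sequence of partial sums of
`H^{(p,q)}`, exchanging the order of summation (harmless in `ℝ≥0∞`, all terms being
nonnegative) shows that the series is unchanged when `q` is lowered by one. At `q = 0` it is
`μ(p, m) = ∑ 1/(n^p (n+m))`, computed from `μ(1, m) = H_m/m` (a telescoping sum) and the
partial fraction recursion `μ(p+1, m) = (ζ(p+1) - μ(p, m)) / m`.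
-/

open Finset Real

open Filter Topology
open scoped ENNReal Nat

theorem Finset.sum_Icc_one_eq_sum_range {M : Type*} [AddCommMonoid M] (f : ℕ → M) (n : ℕ) :
    ∑ k ∈ Icc 1 n, f k = ∑ k ∈ range n, f (k + 1) := by
  rw [← Ico_add_one_right_eq_Icc, sum_Ico_eq_sum_range, Nat.add_sub_cancel]
  simp only [add_comm]

theorem hasSum_sub_succ_of_antitone {f : ℕ → ℝ} {l : ℝ} (hf : Antitone f)
    (hl : Tendsto f atTop (𝓝 l)) : HasSum (fun n ↦ f n - f (n + 1)) (f 0 - l) := by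
  rw [hasSum_iff_tendsto_nat_of_nonneg fun n ↦ sub_nonneg.2 (hf n.le_succ)]
  simp_rw [Finset.sum_range_sub']
  exact tendsto_const_nhds.sub hl

theorem ENNReal.tsum_sum_range_succ_mul (a w : ℕ → ℝ≥0∞) :
    ∑' n, (∑ k ∈ range (n + 1), a k) * w n = ∑' k, a k * ∑' j, w (k + j) := by
  have hdiag : ∀ n, (∑ k ∈ range (n + 1), a k) * w n
      = ∑ kj ∈ antidiagonal n, a kj.1 * w (kj.1 + kj.2) := by
    intro n
    rw [Finset.Nat.sum_antidiagonal_eq_sum_range_succ (fun k j ↦ a k * w (k + j)), sum_mul]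
    exact sum_congr rfl fun k hk ↦ by rw [Nat.add_sub_of_le (mem_range_succ_iff.1 hk)]
  simp_rw [hdiag, ← ENNReal.tsum_mul_left]
  rw [← ENNReal.tsum_prod (f := fun k j ↦ a k * w (k + j)),
    ← Finset.HasAntidiagonal.sigmaAntidiagonalEquivProd.tsum_eq, ENNReal.tsum_sigma']
  exact tsum_congr fun n ↦
    (Finset.tsum_subtype _ fun kj : ℕ × ℕ ↦ a kj.1 * w (kj.1 + kj.2)).symm

noncomputable def invChooseWeight (q N : ℕ) : ℝ := ((N : ℝ) * (N + q).choose q)⁻¹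

namespace invChooseWeight

theorem nonneg (q N : ℕ) : 0 ≤ invChooseWeight q N := by
  unfold invChooseWeight; positivity

theorem le_inv (q N : ℕ) : invChooseWeight q N ≤ (N : ℝ)⁻¹ := by
  rcases N.eq_zero_or_pos with rfl | hN
  · simp [invChooseWeight]
  have hchoose : (1 : ℝ) ≤ (N + q).choose q := by exact_mod_cast Nat.choose_pos (by omega)
  exact inv_anti₀ (by positivity) (le_mul_of_one_le_right (by positivity) hchoose)

theorem tendsto_zero (q : ℕ) : Tendsto (invChooseWeight q) atTop (𝓝 0) :=
  squeeze_zero (nonneg q) (le_inv q) (tendsto_inv_atTop_zero.comp tendsto_natCast_atTop_atTop)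

theorem succ_eq_factorial (q M : ℕ) : invChooseWeight q (M + 1) = M ! * q ! / (M + q + 1)! := by
  have h := Nat.add_choose_mul_factorial_mul_factorial (M + 1) q
  rw [invChooseWeight, inv_eq_iff_eq_inv, inv_div, eq_div_iff (by positivity),
    show M + q + 1 = M + 1 + q by ring, ← h, Nat.factorial_succ]
  push_cast
  ring

theorem succ_left {q N : ℕ} (hN : 0 < N) :
    invChooseWeight (q + 1) N = invChooseWeight q N - invChooseWeight q (N + 1) := by
  obtain ⟨M, rfl⟩ := Nat.exists_eq_add_of_lt hN
  simp only [zero_add, succ_eq_factorial]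
  rw [show M + (q + 1) + 1 = M + q + 1 + 1 by ring, show M + 1 + q + 1 = M + q + 1 + 1 by ring]
  simp only [Nat.factorial_succ (M + q + 1), Nat.factorial_succ q, Nat.factorial_succ M]
  push_cast
  field_simp
  ring

theorem hasSum_succ_left {q N : ℕ} (hN : 0 < N) :
    HasSum (fun j ↦ invChooseWeight (q + 1) (N + j)) (invChooseWeight q N) := by
  have hstep : ∀ j, invChooseWeight (q + 1) (N + j)
      = invChooseWeight q (N + j) - invChooseWeight q (N + (j + 1)) := fun j ↦ by
    rw [succ_left (by omega), add_assoc]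
  have hanti : Antitone fun j ↦ invChooseWeight q (N + j) :=
    antitone_nat_of_succ_le fun j ↦ by linarith [hstep j, nonneg (q + 1) (N + j)]
  have hlim : Tendsto (fun j ↦ invChooseWeight q (N + j)) atTop (𝓝 0) :=
    (tendsto_zero q).comp (tendsto_atTop_mono (Nat.le_add_left · N) tendsto_id)
  simpa [hstep] using hasSum_sub_succ_of_antitone hanti hlim

end invChooseWeight

theorem gHH_nonneg (p : ℤ) : ∀ q n, 0 ≤ gHH p q n
  | 0, n => by rw [gHH]; split <;> positivity
  | q + 1, n => sum_nonneg fun k _ ↦ gHH_nonneg p q k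

theorem gHH_apply_zero (p : ℤ) (q : ℕ) : gHH p q 0 = 0 := by
  cases q <;> simp [gHH]

theorem gHH_zero_natCast {p : ℕ} (hp : p ≠ 0) (n : ℕ) : gHH p 0 n = ((n : ℝ) ^ p)⁻¹ := by
  rcases eq_or_ne n 0 with rfl | hn
  · simp [gHH, hp]
  · simp [gHH, hn]

theorem gHH_succ_eq_sum_range (p : ℤ) (q n : ℕ) :
    gHH p (q + 1) n = ∑ k ∈ range (n + 1), gHH p q k := by
  rw [gHH, sum_range_succ', sum_Icc_one_eq_sum_range, gHH_apply_zero, add_zero]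

theorem tsum_ofReal_gHH_succ_mul {m : ℕ} (hm : 0 < m) (p : ℤ) (q : ℕ) :
    ∑' n, ENNReal.ofReal (gHH p (q + 1) n * invChooseWeight (q + 1) (n + m))
      = ∑' n, ENNReal.ofReal (gHH p q n * invChooseWeight q (n + m)) := by
  have htail : ∀ k, ∑' j, ENNReal.ofReal (invChooseWeight (q + 1) (k + j + m))
      = ENNReal.ofReal (invChooseWeight q (k + m)) := fun k ↦ by
    have h := invChooseWeight.hasSum_succ_left (q := q) (show 0 < k + m by omega)
    rw [← h.tsum_eq,
      ENNReal.ofReal_tsum_of_nonneg (fun _ ↦ invChooseWeight.nonneg _ _) h.summable]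
    exact tsum_congr fun j ↦ by rw [add_right_comm]
  simp_rw [gHH_succ_eq_sum_range, ENNReal.ofReal_mul (sum_nonneg fun _ _ ↦ gHH_nonneg _ _ _),
    ENNReal.ofReal_sum_of_nonneg fun _ _ ↦ gHH_nonneg _ _ _, ENNReal.tsum_sum_range_succ_mul,
    htail, ← ENNReal.ofReal_mul (gHH_nonneg _ _ _)]

theorem tsum_ofReal_gHH_mul_eq_tsum_zero {m : ℕ} (hm : 0 < m) (p : ℤ) (q : ℕ) :
    ∑' n, ENNReal.ofReal (gHH p q n * invChooseWeight q (n + m))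
      = ∑' n, ENNReal.ofReal (gHH p 0 n * invChooseWeight 0 (n + m)) := by
  induction q with
  | zero => rfl
  | succ q ih => rw [tsum_ofReal_gHH_succ_mul hm, ih]

-- Summed over all of `ℕ`: the `n = 0` term vanishes because `(0 : ℝ)⁻¹ = 0`.
theorem hasSum_inv_mul_inv_add {m : ℕ} (hm : 0 < m) :
    HasSum (fun n : ℕ ↦ (n : ℝ)⁻¹ * ((n : ℝ) + m)⁻¹) (gH 1 m / m) := by
  set g : ℕ → ℝ := fun k ↦ ((k : ℝ) + 1)⁻¹
  have hanti : Antitone g := fun a b hab ↦ inv_anti₀ (by positivity) (by gcongr)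
  have hlim : Tendsto g atTop (𝓝 0) :=
    tendsto_inv_atTop_zero.comp (tendsto_atTop_add_const_right _ _ tendsto_natCast_atTop_atTop)
  have htele : ∀ i, HasSum (fun n ↦ g (n + i) - g (n + i + 1)) (g i) := fun i ↦ by
    simpa [add_right_comm] using hasSum_sub_succ_of_antitone
      (hanti.comp_monotone (add_left_mono (a := i))) (hlim.comp (tendsto_add_atTop_nat i))
  have hsum : HasSum (fun n ↦ (∑ i ∈ range m, (g (n + i) - g (n + i + 1))) / m)
      (gH 1 m / m) := by
    simpa [gH, sum_Icc_one_eq_sum_range, g] using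
      (hasSum_sum fun i _ ↦ htele i).div_const (m : ℝ)
  rw [← hasSum_nat_add_iff' 1, range_one, sum_singleton, Nat.cast_zero, inv_zero, zero_mul,
    sub_zero]
  refine hsum.congr_fun fun n ↦ ?_
  rw [show ∑ i ∈ range m, (g (n + i) - g (n + i + 1)) = g n - g (n + m) from
    sum_range_sub' (fun i ↦ g (n + i)) m]
  simp only [g]
  push_cast
  field_simp
  ring

theorem hasSum_zv {s : ℕ} (hs : 2 ≤ s) :
    HasSum (fun n : ℕ ↦ ((n : ℝ) ^ s)⁻¹) (zv s) := by
  have hzero : ((((0 : ℕ) : ℝ) ^ (s : ℤ))⁻¹) = 0 := by simp; omega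
  rw [zv, tsum_pnat_eq_tsum_of_eq_zero (f := fun n : ℕ ↦ ((n : ℝ) ^ (s : ℤ))⁻¹) hzero]
  simpa only [zpow_natCast] using (Real.summable_nat_pow_inv.2 hs).hasSum

noncomputable def muClosedForm (p m : ℕ) : ℝ :=
  (-1 : ℝ) ^ (p - 1) * gH 1 m / (m : ℝ) ^ p
    + ∑ i ∈ Icc 1 (p - 1), (-1 : ℝ) ^ (i - 1) * zv ((p : ℤ) + 1 - i) / (m : ℝ) ^ i

theorem muClosedForm_one (m : ℕ) : muClosedForm 1 m = gH 1 m / m := by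
  simp [muClosedForm]

theorem muClosedForm_succ (m : ℕ) {p : ℕ} (hp : 1 ≤ p) :
    muClosedForm (p + 1) m = (zv ((p : ℤ) + 1) - muClosedForm p m) / m := by
  obtain ⟨k, rfl⟩ := Nat.exists_eq_add_of_le' hp
  simp only [muClosedForm, Nat.add_sub_cancel, sum_Icc_one_eq_sum_range, sum_range_succ']
  push_cast
  have hshift : ∀ x : ℕ, (k : ℤ) + 1 + 1 + 1 - (x + 1 + 1) = k + 1 + 1 - (x + 1) := fun x ↦ by
    ring
  have hsum (f : ℕ → ℝ) : ∑ x ∈ range k, (-1 : ℝ) ^ (x + 1) * f x / m ^ (x + 1 + 1)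
      = -(∑ x ∈ range k, (-1 : ℝ) ^ x * f x / m ^ (x + 1)) / m := by
    rw [neg_div, sum_div, ← sum_neg_distrib]
    exact sum_congr rfl fun x _ ↦ by ring
  simp only [hshift, hsum, add_sub_cancel_right]
  ring

theorem hasSum_inv_pow_mul_inv_add {m p : ℕ} (hm : 0 < m) (hp : 1 ≤ p) :
    HasSum (fun n : ℕ ↦ ((n : ℝ) ^ p)⁻¹ * ((n : ℝ) + m)⁻¹) (muClosedForm p m) := by
  induction p, hp using Nat.le_induction with
  | base => simpa [muClosedForm_one] using hasSum_inv_mul_inv_add hm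
  | succ p hp ih =>
    rw [muClosedForm_succ m hp]
    refine (((hasSum_zv (s := p + 1) (by omega)).sub ih).div_const (m : ℝ)).congr_fun
      fun n ↦ ?_
    rcases n.eq_zero_or_pos with rfl | hn
    · simp [show p ≠ 0 by omega]
    · field_simp
      ring

/-- The case `l = q`: the value of the series does not depend on `q`. -/
theorem stmt_6 (p q m : ℕ) (hp : 1 ≤ p) (hm : 1 ≤ m) :
    ∑' n : ℕ+, gHH p q n / (((n : ℝ) + m) * ((((n : ℕ) + m + q).choose q : ℕ) : ℝ))
      = (-1 : ℝ) ^ (p - 1) * gH 1 m / (m : ℝ) ^ p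
        + ∑ i ∈ Finset.Icc 1 (p - 1),
            (-1 : ℝ) ^ (i - 1) * zv ((p : ℤ) + 1 - i) / (m : ℝ) ^ i := by
  have hbase := hasSum_inv_pow_mul_inv_add hm hp
  have hterm : ∀ n : ℕ, gHH p q n / (((n : ℝ) + m) * (((n + m + q).choose q : ℕ) : ℝ))
      = gHH p q n * invChooseWeight q (n + m) := fun n ↦ by
    simp [invChooseWeight, div_eq_mul_inv]
  have hbase_term : ∀ n : ℕ, gHH p 0 n * invChooseWeight 0 (n + m)
      = ((n : ℝ) ^ p)⁻¹ * ((n : ℝ) + m)⁻¹ := fun n ↦ by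
    simp [gHH_zero_natCast (show p ≠ 0 by omega), invChooseWeight]
  calc ∑' n : ℕ+, gHH p q n / (((n : ℝ) + m) * ((((n : ℕ) + m + q).choose q : ℕ) : ℝ))
      = ∑' n : ℕ, gHH p q n * invChooseWeight q (n + m) := by
        rw [← tsum_pnat_eq_tsum_of_eq_zero (by simp [gHH_apply_zero])]
        exact tsum_congr fun n ↦ hterm n
    _ = (∑' n : ℕ, ENNReal.ofReal (gHH p q n * invChooseWeight q (n + m))).toReal := by
        rw [ENNReal.tsum_toReal_eq fun _ ↦ ENNReal.ofReal_ne_top]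
        exact tsum_congr fun n ↦
          (ENNReal.toReal_ofReal (mul_nonneg (gHH_nonneg _ _ _) (invChooseWeight.nonneg _ _))).symm
    _ = (∑' n : ℕ, ENNReal.ofReal (((n : ℝ) ^ p)⁻¹ * ((n : ℝ) + m)⁻¹)).toReal := by
        simp only [tsum_ofReal_gHH_mul_eq_tsum_zero hm, hbase_term]
    _ = muClosedForm p m := by
        rw [← ENNReal.ofReal_tsum_of_nonneg (fun n ↦ by positivity) hbase.summable,
          hbase.tsum_eq, ENNReal.toReal_ofReal (hbase.nonneg fun n ↦ by positivity)]
end
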